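/- Let n ≥ 2, d ≥ 1, and 2 ≤ k ≤ N(n,d) = C(n+d-1, n-1). Then the dual cones satisfy the strict inclusion (Σ_{n,2d}^k)* ⊊ (Σ_{n,2d}^{k-1})*: every form in (Σ_{n,2d}^k)* lies in (Σ_{n,2d}^{k-1})*, and there exists a form p of degree 2d with p ∈ (Σ_{n,2d}^{k-1})* but p ∉ (Σ_{n,2d}^k)*. -/

import Mathlib

open MvPolynomial Finset

/-- The Fischer inner product of two `n`-ary forms of degree `2d`. -/
noncomputable def fischer (n d : ℕ) (p q : MvPolynomial (Fin n) ℝ) : ℝ :=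
  ∑ i ∈ p.support ∪ q.support,
    (((∏ j, Nat.factorial (i j) : ℕ) : ℝ) / ((2 * d).factorial : ℝ)) *
      coeff i p * coeff i q

/-- The dual cone `(Σ_{n,2d}^k)*`. -/
def DualSigma (n d k : ℕ) : Set (MvPolynomial (Fin n) ℝ) :=
  { p | p.IsHomogeneous (2 * d) ∧
      ∀ h : MvPolynomial (Fin n) ℝ, h.IsHomogeneous d → h.support.card ≤ k →
        0 ≤ fischer n d p (h ^ 2) }

/-!
For the Fischer product on forms of degree `2d`, evaluation at a point `x` is represented by
`(x₁X₁ + ⋯ + xₙXₙ) ^ (2d)`, so `p = ∑ⱼ (xⱼ · X) ^ (2d) - ε (y · X) ^ (2d)` satisfies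
`[p, h²] = ∑ⱼ h(xⱼ)² - ε h(y)²`. Put all points on the curve `t ↦ (t ^ (d + 1) ^ i)ᵢ`, along which a
form `h` of degree `d` becomes a univariate polynomial with one term per monomial of `h` (distinct
exponents of degree `d` are distinct numbers in base `d + 1`), and take `xⱼ` at `t = 1, …, k - 1`.

By Descartes' rule of signs, a form with at most `k - 1` terms vanishing at every `xⱼ` vanishes on
the whole curve. So on each of the finitely many spaces of forms with a given support of size
`≤ k - 1`, `h ↦ h(y)` is a linear combination of the `h ↦ h(xⱼ)`, which bounds `h(y)²` by a multiple
of `∑ⱼ h(xⱼ)²`; for small `ε`, `p` lies in `(Σ^{k-1})*`. On the other hand, the `k - 1`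
evaluations have a common nonzero zero `h₀` among the forms supported on `k` given monomials;
choosing `y` on the curve with `h₀(y) ≠ 0` makes `[p, h₀²]` negative.
-/

namespace Polynomial

theorem signVariations_lt_card_support {R : Type*} [Semiring R] [LinearOrder R] {P : R[X]}
    (hP : P ≠ 0) : P.signVariations < #P.support := by
  induction h : #P.support generalizing P with
  | zero => exact absurd (card_support_eq_zero.mp h) hP
  | succ c ih =>
    by_cases hE : P.eraseLead = 0
    · rw [← eraseLead_add_monomial_natDegree_leadingCoeff P, hE, zero_add,
        signVariations_monomial]
      omega
    · have hErase := ih hE (card_support_eraseLead' h)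
      have hstep := signVariations_le_eraseLead_succ P
      omega

theorem eq_zero_of_card_support_le_of_forall_pos_isRoot {R : Type*} [CommRing R]
    [LinearOrder R] [IsStrictOrderedRing R] {P : R[X]} {S : Finset R}
    (hS : ∀ t ∈ S, 0 < t ∧ P.IsRoot t) (hP : #P.support ≤ #S) : P = 0 := by
  by_contra h0
  have hS_le : #S ≤ P.roots.countP (0 < ·) := by
    rw [Multiset.countP_eq_card_filter, ← Finset.card_val]
    refine Multiset.card_le_card ((Multiset.le_iff_subset S.nodup).mpr fun t ht => ?_)
    exact Multiset.mem_filter.mpr ⟨(mem_roots h0).mpr (hS t ht).2, (hS t ht).1⟩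
  have hDescartes := roots_countP_pos_le_signVariations P
  have hsign := signVariations_lt_card_support h0
  omega

end Polynomial

theorem exists_sq_le_mul_sum_sq_of_iInf_ker_le_ker {𝕜 E ι : Type*} [Field 𝕜] [LinearOrder 𝕜]
    [IsStrictOrderedRing 𝕜] [AddCommGroup E] [Module 𝕜 E] [Fintype ι]
    {L : ι → E →ₗ[𝕜] 𝕜} {K : E →ₗ[𝕜] 𝕜} (h : ⨅ i, LinearMap.ker (L i) ≤ LinearMap.ker K) :
    ∃ M, ∀ v, K v ^ 2 ≤ M * ∑ i, L i v ^ 2 := by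
  obtain ⟨c, rfl⟩ := (Submodule.mem_span_range_iff_exists_fun 𝕜).1 (mem_span_of_iInf_ker_le_ker h)
  refine ⟨∑ i, c i ^ 2, fun v => ?_⟩
  simpa using Finset.sum_mul_sq_le_sq_mul_sq univ c (fun i => L i v)

theorem Finsupp.injOn_weight_pow {n B : ℕ} :
    Set.InjOn (Finsupp.weight fun i : Fin n => B ^ (i : ℕ)) {u | ∀ i, u i < B} := by
  have digits (u : Fin n →₀ ℕ) (hu : ∀ i, u i < B) :
      (finFunctionFinEquiv fun i => (⟨u i, hu i⟩ : Fin B) : ℕ) =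
        Finsupp.weight (fun i : Fin n => B ^ (i : ℕ)) u := by
    rw [finFunctionFinEquiv_apply, Finsupp.weight_apply, Finsupp.sum_fintype _ _ (by simp)]
    simp
  intro u hu v hv huv
  have := finFunctionFinEquiv.injective
    (Fin.ext ((digits u hu).trans (huv.trans (digits v hv).symm)))
  ext i
  exact congrArg Fin.val (congrFun this i)

namespace MvPolynomial

section SparseEvaluation

variable {σ ι : Type*} [Fintype ι]

theorem exists_sq_eval_le_of_mem_restrictSupport (T : Set (σ →₀ ℕ)) (x : ι → σ → ℝ)
    (y : σ → ℝ) (hxy : ∀ h ∈ restrictSupport ℝ T, (∀ i, eval (x i) h = 0) → eval y h = 0) :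
    ∃ M, ∀ h ∈ restrictSupport ℝ T, eval y h ^ 2 ≤ M * ∑ i, eval (x i) h ^ 2 := by
  let evalOn (z : σ → ℝ) := (aeval z).toLinearMap.domRestrict (restrictSupport ℝ T)
  obtain ⟨M, hM⟩ := exists_sq_le_mul_sum_sq_of_iInf_ker_le_ker (L := fun i => evalOn (x i))
    (K := evalOn y) fun h hh => by
      simp only [Submodule.mem_iInf, LinearMap.mem_ker] at hh
      exact hxy h h.2 hh
  exact ⟨M, fun h hh => hM ⟨h, hh⟩⟩

theorem exists_sq_eval_le_of_card_support_le (A : Finset (σ →₀ ℕ)) (m : ℕ) (x : ι → σ → ℝ)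
    (y : σ → ℝ)
    (hxy : ∀ h : MvPolynomial σ ℝ, #h.support ≤ m → (∀ i, eval (x i) h = 0) → eval y h = 0) :
    ∃ M, ∀ h : MvPolynomial σ ℝ, h.support ⊆ A → #h.support ≤ m →
      eval y h ^ 2 ≤ M * ∑ i, eval (x i) h ^ 2 := by
  classical
  have hT : ∀ T ∈ A.powerset.filter (#· ≤ m), ∃ M, ∀ h ∈ restrictSupport ℝ (T : Set (σ →₀ ℕ)),
      eval y h ^ 2 ≤ M * ∑ i, eval (x i) h ^ 2 := fun T hT =>
    exists_sq_eval_le_of_mem_restrictSupport _ x y fun h hh =>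
      hxy h ((card_le_card (coe_subset.mp hh)).trans (mem_filter.mp hT).2)
  choose! M hM using hT
  obtain ⟨M₀, hM₀⟩ := ((A.powerset.filter (#· ≤ m)).image M).exists_le
  refine ⟨M₀, fun h hA hm => ?_⟩
  have hmem : h.support ∈ A.powerset.filter (#· ≤ m) := mem_filter.mpr ⟨mem_powerset.mpr hA, hm⟩
  calc eval y h ^ 2 ≤ M h.support * ∑ i, eval (x i) h ^ 2 := hM _ hmem h Set.Subset.rfl
    _ ≤ M₀ * ∑ i, eval (x i) h ^ 2 :=
      mul_le_mul_of_nonneg_right (hM₀ _ (mem_image_of_mem M hmem)) (by positivity)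

end SparseEvaluation

section Curve

variable {σ R : Type*} [CommSemiring R]

noncomputable def restrictToCurve (w : σ → ℕ) : MvPolynomial σ R →ₐ[R] Polynomial R :=
  aeval fun i => Polynomial.X ^ w i

theorem eval_restrictToCurve (w : σ → ℕ) (h : MvPolynomial σ R) (t : R) :
    (restrictToCurve w h).eval t = eval (fun i => t ^ w i) h := by
  rw [restrictToCurve, aeval_eq_eval₂Hom, coe_eval₂Hom, polynomial_eval_eval₂]
  congr 1
  · ext; simp
  · simp

theorem restrictToCurve_monomial (w : σ → ℕ) (u : σ →₀ ℕ) (a : R) :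
    restrictToCurve w (monomial u a) = Polynomial.monomial (Finsupp.weight w u) a := by
  rw [restrictToCurve, aeval_monomial, Finsupp.prod, Finsupp.weight_apply, Finsupp.sum,
    ← Polynomial.C_mul_X_pow_eq_monomial]
  simp_rw [← pow_mul]
  rw [Finset.prod_pow_eq_pow_sum, Polynomial.algebraMap_eq]
  simp only [smul_eq_mul, mul_comm]

theorem coeff_restrictToCurve (w : σ → ℕ) (h : MvPolynomial σ R) (e : ℕ) :
    (restrictToCurve w h).coeff e = ∑ u ∈ h.support with Finsupp.weight w u = e, coeff u h := by
  conv_lhs => rw [h.as_sum]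
  rw [map_sum, Polynomial.finsetSum_coeff, Finset.sum_filter]
  simp [restrictToCurve_monomial, Polynomial.coeff_monomial]

theorem card_support_restrictToCurve_le (w : σ → ℕ) (h : MvPolynomial σ R) :
    #(restrictToCurve w h).support ≤ #h.support := by
  classical
  refine (card_le_card fun e he => ?_).trans (card_image_le (f := Finsupp.weight w))
  rw [Polynomial.mem_support_iff, coeff_restrictToCurve] at he
  obtain ⟨u, hu, -⟩ := exists_ne_zero_of_sum_ne_zero he
  exact mem_image.mpr ⟨u, mem_filter.mp hu⟩

theorem restrictToCurve_ne_zero {w : σ → ℕ} {h : MvPolynomial σ R}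
    (hw : Set.InjOn (Finsupp.weight w) (h.support : Set (σ →₀ ℕ))) (h0 : h ≠ 0) :
    restrictToCurve w h ≠ 0 := by
  obtain ⟨u, hu⟩ := support_nonempty.mpr h0
  have : (restrictToCurve w h).coeff (Finsupp.weight w u) = coeff u h := by
    rw [coeff_restrictToCurve,
      sum_eq_single_of_mem (s := {v ∈ h.support | Finsupp.weight w v = Finsupp.weight w u}) u
        (mem_filter.mpr ⟨hu, rfl⟩)]
    exact fun v hv hvu => absurd (hw (mem_filter.mp hv).1 hu (mem_filter.mp hv).2) hvu
  exact fun h0' => mem_support_iff.mp hu (by rw [← this, h0', Polynomial.coeff_zero])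

theorem eval_curve_eq_zero_of_card_support_le (w : σ → ℕ) {m : ℕ} {h : MvPolynomial σ ℝ}
    (hm : #h.support ≤ m) (hzero : ∀ j : Fin m, eval (fun i => ((j : ℝ) + 1) ^ w i) h = 0)
    (t : ℝ) : eval (fun i => t ^ w i) h = 0 := by
  have nodes : #(univ.image fun j : Fin m => (j : ℝ) + 1) = m := by
    rw [card_image_of_injective _ fun i j hij => Fin.ext (by simpa using hij), card_fin]
  have hcurve : restrictToCurve w h = 0 := by
    refine Polynomial.eq_zero_of_card_support_le_of_forall_pos_isRoot
      (S := univ.image fun j : Fin m => (j : ℝ) + 1) ?_ ?_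
    · simp only [mem_image, mem_univ, true_and, forall_exists_index, forall_apply_eq_imp_iff]
      exact fun j => ⟨by positivity, by simp [Polynomial.IsRoot, eval_restrictToCurve, hzero j]⟩
    · rw [nodes]
      exact (card_support_restrictToCurve_le w h).trans hm
  rw [← eval_restrictToCurve, hcurve, Polynomial.eval_zero]

end Curve

theorem isHomogeneous_iff_support_subset_finsuppAntidiag {n m : ℕ} {R : Type*} [CommSemiring R]
    {φ : MvPolynomial (Fin n) R} : φ.IsHomogeneous m ↔ φ.support ⊆ univ.finsuppAntidiag m := by
  rw [← mem_homogeneousSubmodule, homogeneousSubmodule_eq_finsupp_supported,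
    AddMonoidAlgebra.mem_supported, ← coe_subset]
  congr!
  ext u
  simp [mem_finsuppAntidiag, Finsupp.degree_eq_sum]

end MvPolynomial

theorem dualSigma_antitone (n d : ℕ) : Antitone (DualSigma n d) :=
  fun _ _ hkl _ hp => ⟨hp.1, fun h hh hcard => hp.2 h hh (hcard.trans hkl)⟩

theorem fischer_eq_sum_support_right (n d : ℕ) (p q : MvPolynomial (Fin n) ℝ) :
    fischer n d p q = ∑ i ∈ q.support,
      (((∏ j, Nat.factorial (i j) : ℕ) : ℝ) / ((2 * d).factorial : ℝ)) * coeff i p * coeff i q := by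
  refine (sum_subset subset_union_right fun i _ hi => ?_).symm
  rw [notMem_support_iff.mp hi, mul_zero]

noncomputable def fischerLeft (n d : ℕ) (q : MvPolynomial (Fin n) ℝ) :
    MvPolynomial (Fin n) ℝ →ₗ[ℝ] ℝ where
  toFun p := fischer n d p q
  map_add' p p' := by
    simp only [fischer_eq_sum_support_right, coeff_add, mul_add, add_mul, sum_add_distrib]
  map_smul' c p := by
    simp only [fischer_eq_sum_support_right, coeff_smul, smul_eq_mul, mul_sum, RingHom.id_apply]
    exact sum_congr rfl fun i _ => by ring

/-- The form `(x₁X₁ + ⋯ + xₙXₙ) ^ (2 * d)`, written out by the multinomial theorem. -/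
noncomputable def fischerKernel (n d : ℕ) (x : Fin n → ℝ) : MvPolynomial (Fin n) ℝ :=
  ∑ u ∈ univ.finsuppAntidiag (2 * d),
    monomial u (((2 * d).factorial : ℝ) / ((∏ j, Nat.factorial (u j) : ℕ) : ℝ) * ∏ j, x j ^ u j)

theorem isHomogeneous_fischerKernel (n d : ℕ) (x : Fin n → ℝ) :
    (fischerKernel n d x).IsHomogeneous (2 * d) :=
  isHomogeneous_iff_support_subset_finsuppAntidiag.mpr <| support_sum.trans <|
    biUnion_subset.mpr fun _ hu => support_monomial_subset.trans (singleton_subset_iff.mpr hu)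

theorem fischer_fischerKernel (n d : ℕ) (x : Fin n → ℝ) {q : MvPolynomial (Fin n) ℝ}
    (hq : q.IsHomogeneous (2 * d)) : fischer n d (fischerKernel n d x) q = eval x q := by
  rw [fischer_eq_sum_support_right, eval_eq']
  refine sum_congr rfl fun u hu => ?_
  rw [fischerKernel, coeff_sum, sum_eq_single_of_mem u
      (isHomogeneous_iff_support_subset_finsuppAntidiag.mp hq hu)
      fun v _ hvu => by rw [coeff_monomial, if_neg hvu],
    coeff_monomial, if_pos rfl]
  have : (0 : ℝ) < ((∏ j, Nat.factorial (u j) : ℕ) : ℝ) := by positivity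
  field_simp

theorem fischer_sum_sub_smul_fischerKernel {ι : Type*} [Fintype ι] (n d : ℕ)
    (x : ι → Fin n → ℝ) (y : Fin n → ℝ) (ε : ℝ) {h : MvPolynomial (Fin n) ℝ}
    (hh : h.IsHomogeneous d) :
    fischer n d (∑ i, fischerKernel n d (x i) - ε • fischerKernel n d y) (h ^ 2) =
      ∑ i, eval (x i) h ^ 2 - ε * eval y h ^ 2 := by
  have hsq : (h ^ 2).IsHomogeneous (2 * d) := by simpa [mul_comm] using hh.pow 2
  change fischerLeft n d (h ^ 2) _ = _
  simp only [map_sub, map_sum, map_smul, smul_eq_mul]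
  simp only [fischerLeft, LinearMap.coe_mk, AddHom.coe_mk, fischer_fischerKernel _ _ _ hsq,
    map_pow]

theorem exists_pos_sum_fischerKernel_sub_smul_mem_dualSigma (n d m : ℕ) (w : Fin n → ℕ)
    (t : ℝ) : ∃ ε : ℝ, 0 < ε ∧
      ∑ j : Fin m, fischerKernel n d (fun i => ((j : ℝ) + 1) ^ w i) -
        ε • fischerKernel n d (fun i => t ^ w i) ∈ DualSigma n d m := by
  obtain ⟨M, hM⟩ := exists_sq_eval_le_of_card_support_le (univ.finsuppAntidiag d) m _ _
    fun h hm hzero => eval_curve_eq_zero_of_card_support_le w hm hzero t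
  refine ⟨(max M 1)⁻¹, by positivity, ?_, fun h hh hm => ?_⟩
  · exact (homogeneousSubmodule (Fin n) ℝ (2 * d)).sub_mem
      (sum_mem fun j _ => isHomogeneous_fischerKernel n d _)
      (Submodule.smul_mem _ _ (isHomogeneous_fischerKernel n d _))
  rw [fischer_sum_sub_smul_fischerKernel _ _ _ _ _ hh, sub_nonneg]
  calc (max M 1)⁻¹ * eval (fun i => t ^ w i) h ^ 2
      ≤ (max M 1)⁻¹ * (max M 1 * ∑ j : Fin m, eval (fun i => ((j : ℝ) + 1) ^ w i) h ^ 2) := by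
        gcongr
        exact (hM h (isHomogeneous_iff_support_subset_finsuppAntidiag.mp hh) hm).trans
          (by gcongr; exact le_max_left M 1)
    _ = ∑ j : Fin m, eval (fun i => ((j : ℝ) + 1) ^ w i) h ^ 2 := by
        rw [inv_mul_cancel_left₀ (by positivity)]

theorem exists_isHomogeneous_card_support_le_vanishing_at_nodes (n d m k : ℕ) (hmk : m < k)
    (hk : k ≤ #(univ.finsuppAntidiag (ι := Fin n) d)) :
    ∃ h : MvPolynomial (Fin n) ℝ, h.IsHomogeneous d ∧ #h.support ≤ k ∧
      (∀ j : Fin m, eval (fun i : Fin n => ((j : ℝ) + 1) ^ (d + 1) ^ (i : ℕ)) h = 0) ∧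
      ∃ t : ℝ, eval (fun i : Fin n => t ^ (d + 1) ^ (i : ℕ)) h ≠ 0 := by
  obtain ⟨T, hTA, rfl⟩ := exists_subset_card_eq hk
  let evalNodes : restrictSupport ℝ (T : Set (Fin n →₀ ℕ)) →ₗ[ℝ] Fin m → ℝ :=
    LinearMap.pi fun j =>
      (aeval fun i : Fin n => ((j : ℝ) + 1) ^ (d + 1) ^ (i : ℕ)).toLinearMap.domRestrict _
  have := Module.Finite.of_basis (basisRestrictSupport ℝ (T : Set (Fin n →₀ ℕ)))
  have hdim : Module.finrank ℝ (Fin m → ℝ) <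
      Module.finrank ℝ (restrictSupport ℝ (T : Set (Fin n →₀ ℕ))) := by
    rw [Module.finrank_eq_card_basis (basisRestrictSupport ℝ _), Module.finrank_fin_fun]
    simpa using hmk
  obtain ⟨⟨h, hT⟩, hker, h0⟩ := Submodule.exists_mem_ne_zero_of_ne_bot
    (LinearMap.ker_ne_bot_of_finrank_lt (f := evalNodes) hdim)
  have hA : h.support ⊆ univ.finsuppAntidiag d := (coe_subset.mp hT).trans hTA
  have hdigits : ∀ u ∈ h.support, ∀ i, u i < d + 1 := fun u hu i => by
    have hsum : ∑ j, u j = d := (mem_finsuppAntidiag.mp (hA hu)).1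
    have := single_le_sum (f := u) (fun _ _ => Nat.zero_le _) (mem_univ i)
    omega
  have hcurve : restrictToCurve (fun i : Fin n => (d + 1) ^ (i : ℕ)) h ≠ 0 :=
    restrictToCurve_ne_zero (Finsupp.injOn_weight_pow.mono fun u hu => hdigits u hu)
      fun h0' => h0 (Subtype.ext h0')
  refine ⟨h, isHomogeneous_iff_support_subset_finsuppAntidiag.mpr hA,
    card_le_card (coe_subset.mp hT),
    fun j => by simpa [evalNodes] using congrFun (LinearMap.mem_ker.mp hker) j, ?_⟩
  by_contra! hvanish
  exact hcurve (Polynomial.funext fun t => by simp [eval_restrictToCurve, hvanish])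

theorem dual_sigma_strict_antitone (n d k : ℕ) (hn : 2 ≤ n)
    (hk2 : 2 ≤ k) (hkN : k ≤ Nat.choose (n + d - 1) (n - 1)) :
    DualSigma n d k ⊆ DualSigma n d (k - 1) ∧
    ∃ p : MvPolynomial (Fin n) ℝ, p ∈ DualSigma n d (k - 1) ∧ p ∉ DualSigma n d k := by
  refine ⟨dualSigma_antitone n d (Nat.sub_le k 1), ?_⟩
  have hkA : k ≤ #(univ.finsuppAntidiag (ι := Fin n) d) := by
    rwa [card_finsuppAntidiag_nat_eq_choose, card_univ, Fintype.card_fin,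
      Nat.choose_symm_of_eq_add (by omega : n + d - 1 = d + (n - 1))]
  obtain ⟨h, hh, hcard, hnodes, t, ht⟩ :=
    exists_isHomogeneous_card_support_le_vanishing_at_nodes n d (k - 1) k (by omega) hkA
  obtain ⟨ε, hε, hp⟩ :=
    exists_pos_sum_fischerKernel_sub_smul_mem_dualSigma n d (k - 1) (fun i => (d + 1) ^ (i : ℕ)) t
  refine ⟨_, hp, fun hmem => ?_⟩
  have hpair := hmem.2 h hh hcard
  rw [fischer_sum_sub_smul_fischerKernel _ _ _ _ _ hh] at hpair
  simp only [hnodes, ne_eq, OfNat.ofNat_ne_zero, not_false_eq_true, zero_pow, sum_const_zero,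
    zero_sub, neg_nonneg] at hpair
  exact (mul_pos hε (sq_pos_of_ne_zero ht)).not_ge hpair
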